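/- arXiv:2204.03757 — 4 statements merged into one kernel-verified Lean document; each statement's English description precedes it below -/
import Mathlib

section
/- Let G be an induced subgraph of a finite simple graph H (via an injection φ: V(G) → V(H) preserving adjacency and non-adjacency), and let B be a standard zero forcing set of G with propagation time p. Then B' = V(H) \ φ(V(G)\B) is a standard zero forcing set of H with propagation time at most p. -/
open SimpleGraph Set

/-- `v` can force `w` under the standard color change rule given blue set `B`. -/
def canForce {V : Type*} (G : SimpleGraph V) (B : Set V) (v w : V) : Prop :=
  v ∈ B ∧ w ∉ B ∧ G.Adj v w ∧ ∀ u, G.Adj v u → u ∉ B → u = w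

/-- One simultaneous round of standard zero forcing. -/
def zfStep {V : Type*} (G : SimpleGraph V) (B : Set V) : Set V :=
  B ∪ {w | ∃ v, canForce G B v w}

/-- The blue set after `t` simultaneous rounds. -/
def zfIter {V : Type*} (G : SimpleGraph V) (B : Set V) : ℕ → Set V
  | 0 => B
  | t + 1 => zfStep G (zfIter G B t)

/-- `B` is a standard zero forcing set of `G`. -/
def IsZFS {V : Type*} (G : SimpleGraph V) (B : Set V) : Prop :=
  ∃ t, zfIter G B t = Set.univ

/-- Propagation time of `B` in `G`. -/
noncomputable def zfpt {V : Type*} (G : SimpleGraph V) (B : Set V) : ℕ :=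
  sInf {t | zfIter G B t = Set.univ}

/-!
If `f : G ↪g H` and every vertex outside the image of the white vertices of `G` is blue in `H`,
then each force `v → a` performed in `G` can be replayed as `f v → f a` in `H`: the white
neighbours of `f v` in `H` all lie in the image of white vertices of `G`, and since `f` is
induced these are exactly the images of the white neighbours of `v`. By induction on the
rounds, after `t` rounds every white vertex of `H` is the image of a white vertex of `G`.
-/

section InducedSubgraph

variable {V W : Type*} {G : SimpleGraph V} {H : SimpleGraph W}

theorem canForce_map (f : G ↪g H) {S : Set V} {T : Set W} (hST : (f '' Sᶜ)ᶜ ⊆ T)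
    {v a : V} (hva : canForce G S v a) (haT : f a ∉ T) : canForce H T (f v) (f a) := by
  obtain ⟨hvS, -, hadj, hunique⟩ := hva
  refine ⟨hST ?_, haT, f.map_adj_iff.2 hadj, fun u hu huT => ?_⟩
  · rintro ⟨b, hbS, hbv⟩
    exact hbS (f.injective hbv ▸ hvS)
  · obtain ⟨b, hbS, rfl⟩ := not_not.mp (mt (@hST u) huT)
    rw [hunique b (f.map_adj_iff.1 hu) hbS]

theorem compl_image_compl_zfStep_subset (f : G ↪g H) {S : Set V} {T : Set W}
    (hST : (f '' Sᶜ)ᶜ ⊆ T) : (f '' (zfStep G S)ᶜ)ᶜ ⊆ zfStep H T := by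
  intro w hw
  by_cases hwT : w ∈ T
  · exact Or.inl hwT
  obtain ⟨a, haS, rfl⟩ := not_not.mp (mt (@hST w) hwT)
  have ha : a ∈ zfStep G S := by_contra fun h => hw ⟨a, h, rfl⟩
  obtain ⟨v, hva⟩ : ∃ v, canForce G S v a := ha.resolve_left haS
  exact Or.inr ⟨f v, canForce_map f hST hva hwT⟩

theorem compl_image_compl_zfIter_subset (f : G ↪g H) (B : Set V) (t : ℕ) :
    (f '' (zfIter G B t)ᶜ)ᶜ ⊆ zfIter H (f '' Bᶜ)ᶜ t := by
  induction t with
  | zero => exact subset_rfl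
  | succ t ih => exact compl_image_compl_zfStep_subset f ih

theorem zfIter_compl_image_compl_eq_univ (f : G ↪g H) {B : Set V} {t : ℕ}
    (ht : zfIter G B t = univ) : zfIter H (f '' Bᶜ)ᶜ t = univ := by
  simpa [ht] using compl_image_compl_zfIter_subset f B t

end InducedSubgraph

theorem IsZFS.of_zfIter_eq_univ {V W : Type*} {G : SimpleGraph V} {H : SimpleGraph W}
    {B : Set V} {B' : Set W} (hB : IsZFS G B)
    (h : ∀ t, zfIter G B t = univ → zfIter H B' t = univ) :
    IsZFS H B' ∧ zfpt H B' ≤ zfpt G B := by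
  obtain ⟨t, ht⟩ := hB
  exact ⟨⟨t, h t ht⟩, Nat.sInf_le (h _ (Nat.sInf_mem (s := {t | zfIter G B t = univ}) ⟨t, ht⟩))⟩

theorem induced_subgraph_zfs_general {V W : Type*}
    (G : SimpleGraph V) (H : SimpleGraph W) (φ : V → W)
    (hinj : Function.Injective φ)
    (hadj : ∀ a b : V, H.Adj (φ a) (φ b) ↔ G.Adj a b)
    (B : Set V) (hB : IsZFS G B) :
    IsZFS H (Set.univ \ (φ '' (Set.univ \ B))) ∧
      zfpt H (Set.univ \ (φ '' (Set.univ \ B))) ≤ zfpt G B := by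
  let f : G ↪g H := ⟨⟨φ, hinj⟩, hadj _ _⟩
  simp only [← compl_eq_univ_sdiff]
  exact hB.of_zfIter_eq_univ fun _ => zfIter_compl_image_compl_eq_univ f

theorem induced_subgraph_zfs {V W : Type*} [Fintype V] [Fintype W]
    (G : SimpleGraph V) (H : SimpleGraph W) (φ : V → W)
    (hinj : Function.Injective φ)
    (hadj : ∀ a b : V, H.Adj (φ a) (φ b) ↔ G.Adj a b)
    (B : Set V) (hB : IsZFS G B) :
    IsZFS H (Set.univ \ (φ '' (Set.univ \ B))) ∧
      zfpt H (Set.univ \ (φ '' (Set.univ \ B))) ≤ zfpt G B :=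
  induced_subgraph_zfs_general G H φ hinj hadj B hB
end

section
/- For every nonnegative real ω and every integer k, a graph G satisfies th^ω_Z(G) < |V(G)| − k if and only if there exists a standard zero forcing set B of G such that Σ_{i=1}^{pt(G;B)} (|B^(i)| − ω) > k, where B^(i) is the set of vertices first turned blue in round i. -/
open SimpleGraph Set

/-- Weighted standard throttling number. -/
noncomputable def thw {V : Type*} (G : SimpleGraph V) (ω : ℝ) : ℝ :=
  sInf {x : ℝ | ∃ B : Set V, IsZFS G B ∧ x = (B.ncard : ℝ) + ω * (zfpt G B : ℝ)}

/- The blue sets increase, so |B^(i)| = |B_i| - |B_{i-1}| and the savings sum telescopes to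
|V| - |B| - ω·pt(G;B). The savings condition is therefore |B| + ω·pt(G;B) < |V| - k, which is the
statement about the infimum `thw` once we know that infimum ranges over a finite (hence bounded) set. -/

lemma zfIter_mono {V : Type*} (G : SimpleGraph V) (B : Set V) : Monotone (zfIter G B) :=
  monotone_nat_of_le_succ fun _ => subset_union_left

lemma zfIter_zfpt {V : Type*} {G : SimpleGraph V} {B : Set V} (h : IsZFS G B) :
    zfIter G B (zfpt G B) = univ :=
  Nat.sInf_mem h

lemma Finset.sum_Icc_one_sub_pred {M : Type*} [AddCommGroup M] (f : ℕ → M) (n : ℕ) :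
    ∑ i ∈ Finset.Icc 1 n, (f i - f (i - 1)) = f n - f 0 := by
  induction n with
  | zero => simp
  | succ n ih =>
    rw [Finset.sum_Icc_succ_top (by omega), ih, Nat.add_sub_cancel]
    abel

lemma ncard_zfIter_sdiff_pred {V : Type*} [Finite V] (G : SimpleGraph V) (B : Set V) (i : ℕ) :
    ((zfIter G B i \ zfIter G B (i - 1)).ncard : ℝ) =
      (zfIter G B i).ncard - (zfIter G B (i - 1)).ncard := by
  have hsub : zfIter G B (i - 1) ⊆ zfIter G B i := zfIter_mono G B (Nat.sub_le i 1)
  rw [ncard_sdiff hsub, Nat.cast_sub (ncard_le_ncard hsub)]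

lemma sum_savings_eq {V : Type*} [Fintype V] (G : SimpleGraph V) {B : Set V} (h : IsZFS G B)
    (ω : ℝ) :
    ∑ i ∈ Finset.Icc 1 (zfpt G B), (((zfIter G B i \ zfIter G B (i - 1)).ncard : ℝ) - ω) =
      Fintype.card V - B.ncard - ω * zfpt G B := by
  simp only [Finset.sum_sub_distrib, ncard_zfIter_sdiff_pred,
    Finset.sum_Icc_one_sub_pred (fun i => ((zfIter G B i).ncard : ℝ)), Finset.sum_const,
    Nat.card_Icc, Nat.add_sub_cancel, nsmul_eq_mul, zfIter_zfpt h, ncard_univ,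
    Nat.card_eq_fintype_card]
  rw [zfIter]
  ring

lemma thw_lt_iff {V : Type*} [Finite V] (G : SimpleGraph V) (ω c : ℝ) :
    thw G ω < c ↔ ∃ B : Set V, IsZFS G B ∧ (B.ncard : ℝ) + ω * zfpt G B < c := by
  set S := {x : ℝ | ∃ B : Set V, IsZFS G B ∧ x = (B.ncard : ℝ) + ω * (zfpt G B : ℝ)}
  have hne : S.Nonempty := ⟨_, univ, ⟨0, rfl⟩, rfl⟩
  have hfin : S.Finite :=
    (finite_range fun B : Set V => (B.ncard : ℝ) + ω * zfpt G B).subset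
      fun _ ⟨B, _, hx⟩ => ⟨B, hx.symm⟩
  rw [thw, csInf_lt_iff hfin.bddBelow hne]
  constructor
  · rintro ⟨_, ⟨B, hB, rfl⟩, hlt⟩
    exact ⟨B, hB, hlt⟩
  · rintro ⟨B, hB, hlt⟩
    exact ⟨_, ⟨B, hB, rfl⟩, hlt⟩

theorem thw_lt_iff_savings_general {V : Type*} [Fintype V] (G : SimpleGraph V)
    (ω : ℝ) (k : ℤ) :
    thw G ω < (Fintype.card V : ℝ) - (k : ℝ) ↔
      ∃ B : Set V, IsZFS G B ∧
        (k : ℝ) < ∑ i ∈ Finset.Icc 1 (zfpt G B),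
          (((zfIter G B i \ zfIter G B (i - 1)).ncard : ℝ) - ω) := by
  rw [thw_lt_iff]
  refine exists_congr fun B => and_congr_right fun hB => ?_
  rw [sum_savings_eq G hB]
  constructor <;> intro h <;> linarith

theorem thw_lt_iff_savings {V : Type*} [Fintype V] (G : SimpleGraph V)
    (ω : ℝ) (hω : 0 ≤ ω) (k : ℤ) :
    thw G ω < (Fintype.card V : ℝ) - (k : ℝ) ↔
      ∃ B : Set V, IsZFS G B ∧
        (k : ℝ) < ∑ i ∈ Finset.Icc 1 (zfpt G B),
          (((zfIter G B i \ zfIter G B (i - 1)).ncard : ℝ) - ω) :=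
  thw_lt_iff_savings_general G ω k
end

section
/- Let G be a graph with a standard zero forcing set B, and suppose x₁ → x₂ → ⋯ → x_m is a forcing chain of a set of forces F that is uniformly as fast as possible (each vertex is forced at the earliest possible round over all sets of forces). If x_i is adjacent to x_j for j ≥ i + 2, then x_i could validly force x_j at the round when x_i forces x_{i+1}, contradicting minimality; hence consecutive-skipping adjacencies force earlier infection. In particular, for the standard rule, such a chain x₁, …, x_m induces a path in G. -/
/-!
A force `v → w` performed at the last round before `w` turns blue requires every other neighbour
of `v` to be blue already; so a neighbour `u` of `v` turning blue strictly later than `w` would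
have to be `w` itself. Along a fastest chain the blue-times strictly increase, hence a chord
`x i ~ x j` with `j ≥ i + 2` is such a late neighbour of `x i` and cannot exist.
-/

open SimpleGraph Set

/-- The first round at which `v` is blue (the uniformly-fastest time, since the
simultaneous-round process performs every force as early as possible). -/
noncomputable def zfTime {V : Type*} (G : SimpleGraph V) (B : Set V) (v : V) : ℕ :=
  sInf {t | v ∈ zfIter G B t}

lemma Fin.strictMono_of_lt_val_succ {α : Type*} [Preorder α] {m : ℕ} {f : Fin m → α}
    (h : ∀ (i : Fin m) (hi : i.val + 1 < m), f i < f ⟨i.val + 1, hi⟩) : StrictMono f := by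
  cases m with
  | zero => exact fun i => i.elim0
  | succ n => exact Fin.strictMono_iff_lt_succ.2 fun i => h i.castSucc (by simp)

section ZeroForcing

variable {V : Type*} {G : SimpleGraph V} {B : Set V}

lemma zfTime_mem (hB : IsZFS G B) (v : V) : v ∈ zfIter G B (zfTime G B v) := by
  obtain ⟨t, ht⟩ := hB
  exact Nat.sInf_mem (s := {s | v ∈ zfIter G B s}) ⟨t, by simp [ht]⟩

lemma zfTime_le {v : V} {t : ℕ} (h : v ∈ zfIter G B t) : zfTime G B v ≤ t := Nat.sInf_le h

lemma zfTime_lt_of_canForce (hB : IsZFS G B) {v w : V}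
    (h : canForce G (zfIter G B (zfTime G B w - 1)) v w) : zfTime G B v < zfTime G B w := by
  obtain ⟨hv, hw, -, -⟩ := h
  have hpos : zfTime G B w ≠ 0 := fun h0 => hw (by simpa [h0] using zfTime_mem hB w)
  have := zfTime_le hv
  omega

lemma not_adj_of_canForce_of_zfTime_lt {v w u : V}
    (h : canForce G (zfIter G B (zfTime G B w - 1)) v w) (hu : zfTime G B w < zfTime G B u) :
    ¬G.Adj v u := by
  intro hadj
  have hu_white : u ∉ zfIter G B (zfTime G B w - 1) := fun hmem => by
    have := zfTime_le hmem
    omega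
  exact hu.ne' (congrArg _ (h.2.2.2 u hadj hu_white))

end ZeroForcing

theorem fast_chain_induces_path_general {V : Type*} (G : SimpleGraph V)
    (B : Set V) (hB : IsZFS G B) (m : ℕ) (x : Fin m → V)
    (hchain : ∀ i : Fin m, ∀ h : i.val + 1 < m,
      canForce G (zfIter G B (zfTime G B (x ⟨i.val + 1, h⟩) - 1)) (x i) (x ⟨i.val + 1, h⟩)) :
    Function.Injective x ∧
      ∀ i j : Fin m, G.Adj (x i) (x j) ↔ (i.val + 1 = j.val ∨ j.val + 1 = i.val) := by
  have hmono : StrictMono (zfTime G B ∘ x) :=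
    Fin.strictMono_of_lt_val_succ fun i hi => zfTime_lt_of_canForce hB (hchain i hi)
  have no_chord : ∀ i j : Fin m, i < j → G.Adj (x i) (x j) → i.val + 1 = j.val := by
    intro i j hij hadj
    by_contra hne
    have hi : i.val + 1 < m := by omega
    exact not_adj_of_canForce_of_zfTime_lt (hchain i hi)
      (hmono (Fin.lt_def.2 (show i.val + 1 < j.val by rw [Fin.lt_def] at hij; omega))) hadj
  refine ⟨hmono.injective.of_comp, fun i j => ⟨fun hadj => ?_, ?_⟩⟩
  · rcases lt_trichotomy i j with hij | rfl | hji
    · exact Or.inl (no_chord i j hij hadj)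
    · exact (G.irrefl hadj).elim
    · exact Or.inr (no_chord j i hji hadj.symm)
  · rintro (h | h)
    · have hj : j = ⟨i.val + 1, h ▸ j.isLt⟩ := Fin.ext h.symm
      exact hj ▸ (hchain i _).2.2.1
    · have hi : i = ⟨j.val + 1, h ▸ i.isLt⟩ := Fin.ext h.symm
      exact hi ▸ (hchain j _).2.2.1.symm

theorem fast_chain_induces_path {V : Type*} [Fintype V] (G : SimpleGraph V)
    (B : Set V) (hB : IsZFS G B) (m : ℕ) (x : Fin m → V)
    (hchain : ∀ i : Fin m, ∀ h : i.val + 1 < m,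
      canForce G (zfIter G B (zfTime G B (x ⟨i.val + 1, h⟩) - 1)) (x i) (x ⟨i.val + 1, h⟩)) :
    Function.Injective x ∧
      ∀ i j : Fin m, G.Adj (x i) (x j) ↔ (i.val + 1 = j.val ∨ j.val + 1 = i.val) :=
  fast_chain_induces_path_general G B hB m x hchain
end

section
/- For the standard color change rule, if a graph G contains an induced subgraph G[S] on 2k vertices admitting a zero forcing set B_S with pt(G[S]; B_S) = 1 and |S \ B_S| = k, then th*_Z(G) ≤ |V(G)| − k. -/
open SimpleGraph Set

/-- The no-initial-cost product throttling number for standard zero forcing. -/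
noncomputable def thZprod {V : Type*} [Fintype V] (G : SimpleGraph V) : ℕ :=
  sInf {m | ∃ B : Set V, IsZFS G B ∧ B ≠ Set.univ ∧ m = B.ncard * zfpt G B}

/-!
Colour blue every vertex of `G` except the `k` white vertices `W = S \ B_S`. A force `v → w` of the
single round in `G[S]` is still a force in `G`: the neighbours of `v` outside `S` are blue, and
inside `S` the colouring agrees with `B_S`. Hence `Wᶜ` forces `G` in one round, which gives a
proper zero forcing set of size `|V(G)| - k` and propagation time `1`.
-/

section

variable {V : Type*} (G : SimpleGraph V)

-- `zfpt` is `0` on sets that never force (`sInf ∅ = 0`), so a nonzero value is attained.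
theorem zfIter_zfpt_of_ne_zero {B : Set V} (h : zfpt G B ≠ 0) :
    zfIter G B (zfpt G B) = univ := by
  refine Nat.sInf_mem (s := {t | zfIter G B t = univ}) (nonempty_iff_ne_empty.2 fun hempty => h ?_)
  rw [zfpt, hempty, Nat.sInf_empty]

theorem zfpt_eq_one {B : Set V} (hstep : zfStep G B = univ) (hB : B ≠ univ) :
    zfpt G B = 1 := by
  have hle : zfpt G B ≤ 1 := Nat.sInf_le hstep
  have hne : zfpt G B ≠ 0 := by
    rw [zfpt, Ne, Nat.sInf_eq_zero, not_or]
    exact ⟨hB, nonempty_iff_ne_empty.1 ⟨1, hstep⟩⟩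
  omega

theorem thZprod_le [Fintype V] {B : Set V} (hB : IsZFS G B) (hne : B ≠ univ) :
    thZprod G ≤ B.ncard * zfpt G B :=
  Nat.sInf_le ⟨B, hB, hne, rfl⟩

theorem canForce_of_canForce_induce {s : Set V} {BS : Set s} {v w : s}
    (h : canForce (G.induce s) BS v w) :
    canForce G (s \ Subtype.val '' BS)ᶜ v w := by
  obtain ⟨hv, hw, hadj, huniq⟩ := h
  refine ⟨fun hv' => hv'.2 ⟨v, hv, rfl⟩, fun hw' => hw' ⟨w.2, ?_⟩, hadj, ?_⟩
  · rintro ⟨w', hw'', hww'⟩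
    exact hw (Subtype.ext hww' ▸ hw'')
  · intro u hu hu'
    obtain ⟨hus, huBS⟩ := not_not.1 hu'
    exact congrArg Subtype.val (huniq ⟨u, hus⟩ hu fun h => huBS ⟨_, h, rfl⟩)

theorem zfStep_eq_univ_of_zfStep_induce {s : Set V} {BS : Set s}
    (h : zfStep (G.induce s) BS = univ) :
    zfStep G (s \ Subtype.val '' BS)ᶜ = univ := by
  refine eq_univ_of_forall fun w => ?_
  by_cases hw : w ∈ (s \ Subtype.val '' BS)ᶜ
  · exact Or.inl hw
  obtain ⟨hws, hwBS⟩ := not_not.1 hw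
  rcases h.symm ▸ mem_univ (⟨w, hws⟩ : s) with hw' | ⟨v, hvw⟩
  · exact absurd ⟨_, hw', rfl⟩ hwBS
  · exact Or.inr ⟨v, canForce_of_canForce_induce G hvw⟩

end

theorem product_throttling_upper_bound_general {V : Type*} [Fintype V]
    (G : SimpleGraph V) (k : ℕ) (hk : 0 < k) (S : Finset V)
    (BS : Set (↑(S : Set V) : Type _))
    (hpt : zfpt (G.induce (S : Set V)) BS = 1)
    (hwhite : ((S : Set V) \ (Subtype.val '' BS)).ncard = k) :
    thZprod G ≤ Fintype.card V - k := by
  set W : Set V := (S : Set V) \ Subtype.val '' BS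
  have hstepS : zfStep (G.induce (S : Set V)) BS = univ := by
    have h := zfIter_zfpt_of_ne_zero (G.induce (S : Set V)) (B := BS) (by omega)
    rwa [hpt] at h
  have hstep : zfStep G Wᶜ = univ := zfStep_eq_univ_of_zfStep_induce G hstepS
  have hproper : Wᶜ ≠ univ := compl_ne_univ.2 ((ncard_pos W.toFinite).1 (hwhite ▸ hk))
  have hcard : Wᶜ.ncard = Fintype.card V - k := by
    rw [ncard_compl W, hwhite, Nat.card_eq_fintype_card]
  calc thZprod G ≤ Wᶜ.ncard * zfpt G Wᶜ := thZprod_le G ⟨1, hstep⟩ hproper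
    _ = Fintype.card V - k := by rw [zfpt_eq_one G hstep hproper, mul_one, hcard]

theorem product_throttling_upper_bound {V : Type*} [Fintype V] [DecidableEq V]
    (G : SimpleGraph V) (k : ℕ) (hk : 0 < k) (S : Finset V) (hS : S.card = 2 * k)
    (BS : Set (↑(S : Set V) : Type _))
    (hZFS : IsZFS (G.induce (S : Set V)) BS)
    (hpt : zfpt (G.induce (S : Set V)) BS = 1)
    (hwhite : ((S : Set V) \ (Subtype.val '' BS)).ncard = k) :
    thZprod G ≤ Fintype.card V - k :=
  product_throttling_upper_bound_general G k hk S BS hpt hwhite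
end
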